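/- Let A be a linear subspace of F₂ⁿ and let R ⊆ F₂ⁿ contain exactly one representative of each coset of A, and R' ⊆ F₂ⁿ contain exactly one representative of each coset of A^⊥. Then the sum over s ∈ R and s' ∈ R' of the rank-one orthogonal projections onto the spans of the coset states |A_{s,s'}⟩ equals the identity operator on ℂ^{F₂ⁿ}; that is, Σ_{s ∈ R, s' ∈ R'} |A_{s,s'}⟩⟨A_{s,s'}| = I. -/

import Mathlib

/-!
Fix `s ∈ R`. The coordinate of `|A_{s,s'}⟩` at `x` is `|A|^{-1/2} (-1)^{⟨s', x - s⟩}` on the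
coset `s + A` and `0` off it, so for `x, z ∈ s + A` the `(x, z)` entry of
`Σ_{s' ∈ R'} |A_{s,s'}⟩⟨A_{s,s'}|` is `|A|⁻¹ Σ_{s' ∈ R'} (-1)^{⟨s', z - x⟩}`. As `z - x ∈ A`, the
summand only depends on the coset of `s'` modulo `A^⊥`, so this sum is `|A^⊥|⁻¹` times the full
character sum over `F₂ⁿ`, i.e. `2ⁿ / |A^⊥| = |A|` if `z = x` and `0` otherwise. Hence the inner sum
is the diagonal projection onto the coset `s + A`, and these projections add up to the identity as
`s` runs over `R`.
-/

open scoped Classical InnerProductSpace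

/-- The vector space `F₂ⁿ`. -/
abbrev F2n (n : ℕ) := Fin n → ZMod 2

/-- The `F₂`-bilinear form `⟨x, y⟩ = Σᵢ xᵢ yᵢ` on `F₂ⁿ`. -/
def bform {n : ℕ} (x y : F2n n) : ZMod 2 := ∑ i, x i * y i

/-- The sign `(−1)^b ∈ ℂ` attached to `b ∈ F₂`. -/
def sgn (b : ZMod 2) : ℂ := (-1 : ℂ) ^ b.val

/-- The dual subspace `A^⊥ = {b | ⟨a, b⟩ = 0 for all a ∈ A}`. -/
def dualSub {n : ℕ} (A : Submodule (ZMod 2) (F2n n)) : Submodule (ZMod 2) (F2n n) where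
  carrier := {b | ∀ a ∈ A, bform a b = 0}
  add_mem' := by
    intro b c hb hc a ha
    have h : bform a (b + c) = bform a b + bform a c := by
      simp [bform, Pi.add_apply, mul_add, Finset.sum_add_distrib]
    simp only [Set.mem_setOf_eq] at hb hc ⊢
    rw [h, hb a ha, hc a ha, add_zero]
  zero_mem' := by
    intro a _
    simp [bform]
  smul_mem' := by
    intro c x hx a ha
    have h : bform a (c • x) = c * bform a x := by
      simp only [bform, Finset.mul_sum, Pi.smul_apply, smul_eq_mul]
      exact Finset.sum_congr rfl fun i _ => by ring
    simp only [Set.mem_setOf_eq] at hx ⊢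
    rw [h, hx a ha, mul_zero]

/-- The coset state `|A_{s,s'}⟩ = |A|^{−1/2} Σ_{a ∈ A} (−1)^{⟨s',a⟩} e_{a+s}`. -/
noncomputable def cosetState (n : ℕ) (A : Submodule (ZMod 2) (F2n n)) (s s' : F2n n) :
    EuclideanSpace ℂ (F2n n) :=
  ((Real.sqrt (Nat.card A) : ℂ))⁻¹ •
    ∑ a ∈ (A : Set (F2n n)).toFinset,
      sgn (bform s' a) • EuclideanSpace.single (a + s) (1 : ℂ)

/-- The rank-one (orthogonal) projection `|v⟩⟨v| : x ↦ ⟨v, x⟩ • v`. -/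
noncomputable def ketBra {n : ℕ} (v : EuclideanSpace ℂ (F2n n)) :
    EuclideanSpace ℂ (F2n n) →L[ℂ] EuclideanSpace ℂ (F2n n) :=
  (innerSL ℂ v).smulRight v

lemma sgn_add (a b : ZMod 2) : sgn (a + b) = sgn a * sgn b := by
  rw [sgn, sgn, sgn, ZMod.val_add, ← neg_one_pow_eq_pow_mod_two, pow_add]

lemma sgn_sub (a b : ZMod 2) : sgn (a - b) = sgn a * sgn b := by
  rw [sub_eq_add_neg, ZMod.neg_eq_self_mod_two, sgn_add]

lemma sgn_eq_one_iff {a : ZMod 2} : sgn a = 1 ↔ a = 0 := by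
  rw [sgn, neg_one_pow_eq_one_iff_even (by norm_num), ← ZMod.natCast_eq_zero_iff_even,
    ZMod.natCast_zmod_val]

lemma conj_sgn (a : ZMod 2) : starRingEnd ℂ (sgn a) = sgn a := by
  simp [sgn]

section Bform

variable {n : ℕ}

lemma bform_eq_dotProduct (x y : F2n n) : bform x y = x ⬝ᵥ y := rfl

def bformChar (b : F2n n) : AddChar (F2n n) ℂ where
  toFun y := sgn (bform y b)
  map_zero_eq_one' := by simp [bform_eq_dotProduct, sgn]
  map_add_eq_mul' x y := by rw [bform_eq_dotProduct, add_dotProduct, sgn_add]; rfl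

@[simp]
lemma bformChar_apply (b y : F2n n) : bformChar b y = sgn (bform y b) := rfl

lemma bformChar_eq_zero_iff {b : F2n n} : bformChar b = 0 ↔ b = 0 := by
  simp only [AddChar.eq_zero_iff, bformChar_apply, sgn_eq_one_iff, bform_eq_dotProduct]
  refine ⟨fun h => funext fun j => ?_, fun h y => by simp [h]⟩
  simpa using h (Pi.single j 1)

lemma sum_sgn_bform (b : F2n n) :
    ∑ y, sgn (bform y b) = if b = 0 then 2 ^ n else 0 := by
  have h := (bformChar b).sum_eq_ite
  simp only [bformChar_eq_zero_iff] at h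
  simpa [ZMod.card] using h

end Bform

section Representatives

variable {G : Type*} [AddCommGroup G] {W : AddSubgroup G} {R : Finset G}

lemma bijective_add_of_existsUnique_sub_mem (hR : ∀ x : G, ∃! r, r ∈ R ∧ x - r ∈ W) :
    Function.Bijective (fun p : R × W => (p.1 : G) + p.2) := by
  refine ⟨fun ⟨r, w⟩ ⟨r', w'⟩ h => ?_, fun x => ?_⟩
  · obtain ⟨_, _, huniq⟩ := hR (r + w)
    have hr : (r : G) = r' := by
      refine (huniq r ⟨r.2, by simp [w.2]⟩).trans (huniq r' ⟨r'.2, ?_⟩).symm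
      rw [show (r : G) + w = r' + w' from h]
      simp [w'.2]
    have hw : (w : G) = w' := by simpa [hr] using h
    exact Prod.ext (Subtype.ext hr) (Subtype.ext hw)
  · obtain ⟨r, ⟨hr, hxr⟩, -⟩ := hR x
    exact ⟨(⟨r, hr⟩, ⟨x - r, hxr⟩), add_sub_cancel r x⟩

lemma sum_eq_card_smul_sum_of_existsUnique_sub_mem [Fintype G] {M : Type*} [AddCommMonoid M]
    (hR : ∀ x : G, ∃! r, r ∈ R ∧ x - r ∈ W) (f : G → M)
    (hf : ∀ x, ∀ w ∈ W, f (x + w) = f x) :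
    ∑ x, f x = Nat.card W • ∑ r ∈ R, f r := by
  rw [← Fintype.sum_bijective _ (bijective_add_of_existsUnique_sub_mem hR) _ f fun _ => rfl,
    Fintype.sum_prod_type]
  simp [hf, Finset.smul_sum, Finset.sum_attach R (fun r => Fintype.card W • f r)]

lemma card_filter_sub_mem_eq_one (hR : ∀ x : G, ∃! r, r ∈ R ∧ x - r ∈ W) (x : G) :
    (R.filter (x - · ∈ W)).card = 1 := by
  obtain ⟨r, hr, huniq⟩ := hR x
  refine Finset.card_eq_one.mpr ⟨r, ?_⟩
  ext
  simp only [Finset.mem_filter, Finset.mem_singleton]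
  grind

end Representatives

lemma dotProductBilin_nondegenerate {ι K : Type*} [Fintype ι] [CommRing K] :
    (dotProductBilin K K : LinearMap.BilinForm K (ι → K)).Nondegenerate :=
  ⟨fun x hx => dotProduct_eq_zero x hx,
    fun y hy => dotProduct_eq_zero y fun x => (dotProduct_comm y x).trans (hy x)⟩

section CosetState

variable {n : ℕ}

lemma dualSub_eq_orthogonal (A : Submodule (ZMod 2) (F2n n)) :
    dualSub A = LinearMap.BilinForm.orthogonal (dotProductBilin (ZMod 2) (ZMod 2)) A := rfl

lemma card_mul_card_dualSub (A : Submodule (ZMod 2) (F2n n)) :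
    Nat.card A * Nat.card (dualSub A) = 2 ^ n := by
  rw [Module.natCard_eq_pow_finrank (K := ZMod 2) (V := A),
    Module.natCard_eq_pow_finrank (K := ZMod 2) (V := dualSub A),
    Nat.card_zmod, ← pow_add, dualSub_eq_orthogonal,
    LinearMap.BilinForm.finrank_orthogonal dotProductBilin_nondegenerate,
    add_tsub_cancel_of_le (Submodule.finrank_le A), Module.finrank_fin_fun]

lemma sum_reps_sgn_bform {A : Submodule (ZMod 2) (F2n n)} {R' : Finset (F2n n)}
    (hR' : ∀ x : F2n n, ∃! r, r ∈ R' ∧ x - r ∈ dualSub A) {b : F2n n} (hb : b ∈ A) :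
    ∑ s' ∈ R', sgn (bform s' b) = if b = 0 then (Nat.card A : ℂ) else 0 := by
  have hsum := sum_eq_card_smul_sum_of_existsUnique_sub_mem (W := (dualSub A).toAddSubgroup) hR'
    (fun y => sgn (bform y b)) fun y w hw => by
      simp only [bform_eq_dotProduct, add_dotProduct, dotProduct_comm w]
      rw [← bform_eq_dotProduct b, hw b hb, add_zero]
  rw [sum_sgn_bform] at hsum
  have hcard : (Nat.card (dualSub A) : ℂ) ≠ 0 := Nat.cast_ne_zero.mpr Nat.card_pos.ne'
  refine mul_left_cancel₀ hcard ?_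
  calc (Nat.card (dualSub A) : ℂ) * ∑ s' ∈ R', sgn (bform s' b)
      = if b = 0 then 2 ^ n else 0 := by rw [← nsmul_eq_mul]; exact hsum.symm
    _ = _ := by
      split_ifs
      · rw [mul_comm]
        exact_mod_cast (card_mul_card_dualSub A).symm
      · rw [mul_zero]

lemma cosetState_apply (A : Submodule (ZMod 2) (F2n n)) (s s' x : F2n n) :
    cosetState n A s s' x =
      if x - s ∈ A then ((Real.sqrt (Nat.card A) : ℂ))⁻¹ * sgn (bform s' (x - s)) else 0 := by
  simp [cosetState, Finset.sum_apply, Pi.single_apply, ← sub_eq_iff_eq_add, mul_ite]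

lemma conj_cosetState_apply (A : Submodule (ZMod 2) (F2n n)) (s s' x : F2n n) :
    starRingEnd ℂ (cosetState n A s s' x) = cosetState n A s s' x := by
  rw [cosetState_apply]
  split_ifs <;> simp [conj_sgn]

lemma sum_conj_cosetState_mul_cosetState {A : Submodule (ZMod 2) (F2n n)}
    {R' : Finset (F2n n)} (hR' : ∀ x : F2n n, ∃! r, r ∈ R' ∧ x - r ∈ dualSub A) (s z x : F2n n) :
    ∑ s' ∈ R', starRingEnd ℂ (cosetState n A s s' z) * cosetState n A s s' x
      = if x = z ∧ z - s ∈ A then 1 else 0 := by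
  set c : ℂ := ((Real.sqrt (Nat.card A) : ℂ))⁻¹
  by_cases h : z - s ∈ A ∧ x - s ∈ A
  · obtain ⟨hz, hx⟩ := h
    have hzx : z - x ∈ A := by simpa using A.sub_mem hz hx
    have hc : c * c * Nat.card A = 1 := by
      rw [← mul_inv, ← Complex.ofReal_mul, Real.mul_self_sqrt (Nat.cast_nonneg _),
        Complex.ofReal_natCast, inv_mul_cancel₀ (Nat.cast_ne_zero.mpr Nat.card_pos.ne')]
    calc _ = ∑ s' ∈ R', c * c * sgn (bform s' (z - x)) := by
          refine Finset.sum_congr rfl fun s' _ => ?_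
          have hsgn : sgn (bform s' (z - s)) * sgn (bform s' (x - s)) = sgn (bform s' (z - x)) := by
            rw [← sgn_sub, bform_eq_dotProduct, bform_eq_dotProduct, ← dotProduct_sub,
              sub_sub_sub_cancel_right, bform_eq_dotProduct]
          rw [conj_cosetState_apply, cosetState_apply, cosetState_apply, if_pos hz, if_pos hx,
            ← hsgn]
          ring
      _ = c * c * if z - x = 0 then (Nat.card A : ℂ) else 0 := by
          rw [← Finset.mul_sum, sum_reps_sgn_bform hR' hzx]
      _ = _ := by
          simp only [sub_eq_zero, eq_comm (a := z), hz, and_true]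
          split_ifs
          · exact hc
          · rw [mul_zero]
  · have hzero : ∀ s' ∈ R', starRingEnd ℂ (cosetState n A s s' z) * cosetState n A s s' x = 0 := by
      intro s' _
      rcases not_and_or.mp h with hz | hx <;> simp [cosetState_apply, *]
    rw [Finset.sum_eq_zero hzero, if_neg]
    rintro ⟨rfl, hx⟩
    exact h ⟨hx, hx⟩

lemma ketBra_single (v : EuclideanSpace ℂ (F2n n)) (z : F2n n) :
    ketBra v (EuclideanSpace.single z 1) = starRingEnd ℂ (v z) • v := by
  simp [ketBra, EuclideanSpace.inner_single_right]

end CosetState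

/-- **Resolution of the identity by coset states.** If `R` (resp. `R'`) contains exactly one
representative of each coset of `A` (resp. of `A^⊥`), then
`Σ_{s ∈ R, s' ∈ R'} |A_{s,s'}⟩⟨A_{s,s'}| = I`. -/
theorem cosetState_resolution_of_identity (n : ℕ) (A : Submodule (ZMod 2) (F2n n))
    (R R' : Finset (F2n n))
    (hR : ∀ x : F2n n, ∃! r, r ∈ R ∧ x - r ∈ A)
    (hR' : ∀ x : F2n n, ∃! r, r ∈ R' ∧ x - r ∈ dualSub A) :
    ∑ s ∈ R, ∑ s' ∈ R', ketBra (cosetState n A s s')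
      = ContinuousLinearMap.id ℂ (EuclideanSpace ℂ (F2n n)) := by
  refine ContinuousLinearMap.coe_injective ((EuclideanSpace.basisFun _ ℂ).toBasis.ext fun z => ?_)
  ext x
  have hcoset : ∑ s ∈ R, (if x = z ∧ z - s ∈ A then (1 : ℂ) else 0) = if x = z then 1 else 0 := by
    split_ifs with hxz
    · simpa [hxz] using card_filter_sub_mem_eq_one (W := A.toAddSubgroup) hR z
    · simp [hxz]
  simpa [ketBra_single, sum_conj_cosetState_mul_cosetState hR'] using hcoset
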